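/- arXiv:2410.24067 — 3 statements merged into one kernel-verified Lean document; each statement's English description precedes it below -/
import Mathlib

section
/- Let J be a diagram and (M_w, M_z) the pair of isometries defined by J on H_J. Then: (a) ker M_w* is the closed span of {e_p : p ∈ J_VB}; (b) ker M_z* is the closed span of {e_p : p ∈ J_HB}; (c) ker M_w* ∩ ker M_z* is the closed span of {e_p : p ∈ J_outer}; (d) M_w(ker M_z*) ∩ M_z(ker M_w*) is the closed span of {e_p : p ∈ J_inner}; (e) ker M_w*M_z* is the closed span of {e_p : p ∈ J_border}, where J_border = J_HB ∪ J_VB ∪ J_inner. -/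
open scoped ENNReal ComplexConjugate InnerProductSpace
open Filter

noncomputable section

namespace TaylorDiagram

/-- A diagram: a subset of ℤ² closed under adding ℕ². -/
def IsDiagram (J : Set (ℤ × ℤ)) : Prop :=
  ∀ p ∈ J, ∀ k l : ℕ, (p.1 + (k : ℤ), p.2 + (l : ℤ)) ∈ J

/-- Translate of a set of ℤ² by a vector. -/
def tr (v : ℤ × ℤ) (J : Set (ℤ × ℤ)) : Set (ℤ × ℤ) :=
  (fun p => (v.1 + p.1, v.2 + p.2)) '' J

def Equivalent (J₁ J₂ : Set (ℤ × ℤ)) : Prop := ∃ v : ℤ × ℤ, J₁ = tr v J₂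

/-- Simple diagrams: translation equivalent to ℤ², ℤ₊², ℤ₊×ℤ or ℤ×ℤ₊. -/
def Simple (J : Set (ℤ × ℤ)) : Prop :=
  Equivalent J Set.univ ∨ Equivalent J {p | 0 < p.1 ∧ 0 < p.2} ∨
    Equivalent J {p | 0 < p.1} ∨ Equivalent J {p | 0 < p.2}

/-- The Hilbert space ℓ²(J). -/
abbrev HJ (J : Set (ℤ × ℤ)) : Type := lp (fun _ : J => ℂ) 2

/-- Canonical orthonormal basis vectors of ℓ²(J). -/
def e (J : Set (ℤ × ℤ)) (p : J) : HJ J := lp.single 2 p 1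

/-- `Mw` is the horizontal shift on ℓ²(J). -/
def IsShiftW (J : Set (ℤ × ℤ)) (Mw : HJ J →L[ℂ] HJ J) : Prop :=
  ∀ (p : ℤ × ℤ) (hp : p ∈ J) (hp' : (p.1 + 1, p.2) ∈ J),
    Mw (e J ⟨p, hp⟩) = e J ⟨(p.1 + 1, p.2), hp'⟩

/-- `Mz` is the vertical shift on ℓ²(J). -/
def IsShiftZ (J : Set (ℤ × ℤ)) (Mz : HJ J →L[ℂ] HJ J) : Prop :=
  ∀ (p : ℤ × ℤ) (hp : p ∈ J) (hp' : (p.1, p.2 + 1) ∈ J),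
    Mz (e J ⟨p, hp⟩) = e J ⟨(p.1, p.2 + 1), hp'⟩

section Conditions

variable {H : Type*} [NormedAddCommGroup H] [InnerProductSpace ℂ H]

/-- Condition (T1) of exactness of the Koszul complex. -/
def CondT1 (A B : H →L[ℂ] H) : Prop :=
  LinearMap.ker (A : H →ₗ[ℂ] H) ⊓ LinearMap.ker (B : H →ₗ[ℂ] H) = ⊥

/-- Condition (T2) of exactness of the Koszul complex. -/
def CondT2 (A B : H →L[ℂ] H) : Prop :=
  ∀ h₁ h₂ : H, A h₂ = B h₁ → ∃ h : H, h₁ = A h ∧ h₂ = B h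

/-- Condition (T3) of exactness of the Koszul complex. -/
def CondT3 (A B : H →L[ℂ] H) : Prop :=
  LinearMap.range (A : H →ₗ[ℂ] H) ⊔ LinearMap.range (B : H →ₗ[ℂ] H) = ⊤

/-- Exactness of the (short) Koszul complex of a pair. -/
def KoszulExact (A B : H →L[ℂ] H) : Prop :=
  CondT1 A B ∧ CondT2 A B ∧ CondT3 A B

/-- The Taylor spectrum of a commuting pair. -/
def taylorSpectrum (A B : H →L[ℂ] H) : Set (ℂ × ℂ) :=
  {p | ¬ KoszulExact (p.1 • (1 : H →L[ℂ] H) - A) (p.2 • (1 : H →L[ℂ] H) - B)}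

/-- Γ₂: the set of points where (T2) fails. -/
def Gamma2 (A B : H →L[ℂ] H) : Set (ℂ × ℂ) :=
  {p | ¬ CondT2 (p.1 • (1 : H →L[ℂ] H) - A) (p.2 • (1 : H →L[ℂ] H) - B)}

/-- Γ₃: the set of points where (T3) fails. -/
def Gamma3 (A B : H →L[ℂ] H) : Set (ℂ × ℂ) :=
  {p | ¬ CondT3 (p.1 • (1 : H →L[ℂ] H) - A) (p.2 • (1 : H →L[ℂ] H) - B)}

end Conditions

/-- Vertical border of a diagram. -/
def JVB (J : Set (ℤ × ℤ)) : Set (ℤ × ℤ) := {p | p ∈ J ∧ (p.1 - 1, p.2) ∉ J}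

/-- Horizontal border of a diagram. -/
def JHB (J : Set (ℤ × ℤ)) : Set (ℤ × ℤ) := {p | p ∈ J ∧ (p.1, p.2 - 1) ∉ J}

/-- Outer corners of a diagram. -/
def Jouter (J : Set (ℤ × ℤ)) : Set (ℤ × ℤ) := JHB J ∩ JVB J

/-- Inner corners of a diagram. -/
def Jinner (J : Set (ℤ × ℤ)) : Set (ℤ × ℤ) :=
  {p | p ∈ J ∧ (p.1 - 1, p.2) ∈ J ∧ (p.1, p.2 - 1) ∈ J ∧ (p.1 - 1, p.2 - 1) ∉ J}

/-- Border of a diagram. -/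
def Jborder (J : Set (ℤ × ℤ)) : Set (ℤ × ℤ) := JHB J ∪ JVB J ∪ Jinner J

/-- The basis vectors of `ℓ²(J)` indexed by a subset `S` of `ℤ²`. -/
def basisVecs (J : Set (ℤ × ℤ)) (S : Set (ℤ × ℤ)) : Set (HJ J) :=
  e J '' {p : J | (p : ℤ × ℤ) ∈ S}
end TaylorDiagram

/-!
The closed span of the basis vectors of `ℓ²` indexed by a set `s` is the space of vectors
vanishing off `s`, since every vector is the sum of its coordinate expansion; all five subspaces
in the theorem are of this form. A shift `M` by `v` on `ℓ²(J)` has adjoint `(M* x)_p = x_{p+v}`,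
so `ker M*` is the space of vectors supported on `{p ∈ J | p - v ∉ J}`, and `M` maps the vectors
supported on `S` onto those supported on `(S ∩ J) + v`. This reduces (a)–(d) to identities
between subsets of `J`. For (e), `M_w* M_z* = (M_z M_w)*` with `M_z M_w` a shift by `(1, 1)`, and
in a diagram `p - (1, 1) ∉ J` holds exactly on the border.
-/

namespace lp

variable {ι 𝕜 : Type*} [RCLike 𝕜]

def supportedIn (s : Set ι) : Submodule 𝕜 (lp (fun _ : ι => 𝕜) 2) where
  carrier := {x | ∀ i ∉ s, x i = 0}
  add_mem' hx hy i hi := by simp [hx i hi, hy i hi]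
  zero_mem' _ _ := rfl
  smul_mem' c x hx i hi := by simp [hx i hi]

theorem mem_supportedIn {s : Set ι} {x : lp (fun _ : ι => 𝕜) 2} :
    x ∈ supportedIn s ↔ ∀ i ∉ s, x i = 0 := Iff.rfl

theorem isClosed_supportedIn (s : Set ι) :
    IsClosed (supportedIn (𝕜 := 𝕜) s : Set (lp (fun _ : ι => 𝕜) 2)) := by
  have hs : (supportedIn (𝕜 := 𝕜) s : Set (lp (fun _ : ι => 𝕜) 2)) =
      ⋂ i ∈ sᶜ, {x | x i = 0} := by
    ext x
    simp [mem_supportedIn]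
  rw [hs]
  exact isClosed_biInter fun i _ =>
    isClosed_eq (lipschitzWith_one_eval 2 i).continuous continuous_const

theorem supportedIn_inf_supportedIn (s t : Set ι) :
    supportedIn s ⊓ supportedIn t = (supportedIn (𝕜 := 𝕜) (s ∩ t)) := by
  ext x
  simp only [Submodule.mem_inf, mem_supportedIn, Set.mem_inter_iff, not_and_or, or_imp,
    forall_and]

theorem topologicalClosure_span_single [DecidableEq ι] (s : Set ι) :
    (Submodule.span 𝕜 ((fun i => lp.single 2 i (1 : 𝕜)) '' s)).topologicalClosure =
      supportedIn s := by
  refine le_antisymm (Submodule.topologicalClosure_minimal _ ?_ (isClosed_supportedIn s)) ?_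
  · rw [Submodule.span_le]
    rintro _ ⟨i, hi, rfl⟩ j hj
    exact Pi.single_eq_of_ne (ne_of_mem_of_not_mem hi hj).symm _
  · intro x hx
    rw [← (lp.hasSum_single ENNReal.ofNat_ne_top x).tsum_eq]
    refine tsum_mem (Submodule.isClosed_topologicalClosure _) fun i =>
      Submodule.le_topologicalClosure _ ?_
    by_cases hi : i ∈ s
    · rw [← mul_one (x i), ← smul_eq_mul, lp.single_smul]
      exact Submodule.smul_mem _ _ (Submodule.subset_span ⟨i, hi, rfl⟩)
    · rw [hx i hi, lp.single_zero]
      exact Submodule.zero_mem _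

end lp

namespace TaylorDiagram

open lp

variable {J : Set (ℤ × ℤ)}

theorem IsDiagram.add_mem (hJ : IsDiagram J) {v : ℤ × ℤ} (hv₁ : 0 ≤ v.1)
    (hv₂ : 0 ≤ v.2) : ∀ p ∈ J, p + v ∈ J := by
  intro p hp
  obtain ⟨k, hk⟩ := Int.eq_ofNat_of_zero_le hv₁
  obtain ⟨l, hl⟩ := Int.eq_ofNat_of_zero_le hv₂
  have hpv : p + v = (p.1 + k, p.2 + l) := Prod.ext (by simp [hk]) (by simp [hl])
  exact hpv ▸ hJ p hp k l

theorem sub_one_one_notMem_iff_mem_Jborder (hJ : IsDiagram J) {p : ℤ × ℤ} (hp : p ∈ J) :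
    p - (1, 1) ∉ J ↔ p ∈ Jborder J := by
  have hw := hJ.add_mem (v := (1, 0)) zero_le_one le_rfl (p - (1, 1))
  have hz := hJ.add_mem (v := (0, 1)) le_rfl zero_le_one (p - (1, 1))
  obtain ⟨a, b⟩ := p
  simp only [Prod.mk_sub_mk, Prod.mk_add_mk, sub_add_cancel, add_zero] at hw hz ⊢
  simp only [Jborder, JHB, JVB, Jinner, Set.mem_union, Set.mem_ofPred_eq]
  tauto

theorem supportedIn_preimage_congr {S T : Set (ℤ × ℤ)} (h : ∀ p ∈ J, p ∈ S ↔ p ∈ T) :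
    (supportedIn ((↑) ⁻¹' S) : Submodule ℂ (HJ J)) = supportedIn ((↑) ⁻¹' T) := by
  congr 1
  ext p
  exact h p p.2

theorem topologicalClosure_span_basisVecs (S : Set (ℤ × ℤ)) :
    (Submodule.span ℂ (basisVecs J S)).topologicalClosure = supportedIn ((↑) ⁻¹' S) :=
  topologicalClosure_span_single _

theorem inner_e_left (p : J) (x : HJ J) : ⟪e J p, x⟫_ℂ = x p := by
  classical
  simp [e, lp.inner_single_left]

def IsShift (J : Set (ℤ × ℤ)) (v : ℤ × ℤ) (M : HJ J →L[ℂ] HJ J) : Prop :=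
  ∀ (p : ℤ × ℤ) (hp : p ∈ J) (hp' : p + v ∈ J),
    M (e J ⟨p, hp⟩) = e J ⟨p + v, hp'⟩

theorem IsShiftW.isShift {Mw : HJ J →L[ℂ] HJ J} (hMw : IsShiftW J Mw) :
    IsShift J (1, 0) Mw := by
  intro p hp hp'
  have h : p + (1, 0) = (p.1 + 1, p.2) := Prod.ext rfl (add_zero _)
  convert hMw p hp (h ▸ hp') using 3

theorem IsShiftZ.isShift {Mz : HJ J →L[ℂ] HJ J} (hMz : IsShiftZ J Mz) :
    IsShift J (0, 1) Mz := by
  intro p hp hp'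
  have h : p + (0, 1) = (p.1, p.2 + 1) := Prod.ext (add_zero _) rfl
  convert hMz p hp (h ▸ hp') using 3

namespace IsShift

variable {u v : ℤ × ℤ} {M : HJ J →L[ℂ] HJ J}

theorem comp {A B : HJ J →L[ℂ] HJ J} (hA : IsShift J u A) (hB : IsShift J v B)
    (hu : ∀ p ∈ J, p + u ∈ J) : IsShift J (u + v) (B ∘L A) := by
  intro p hp hp'
  rw [ContinuousLinearMap.comp_apply, hA p hp (hu p hp), hB _ _ (by rwa [add_assoc])]
  simp only [add_assoc]

theorem adjoint_apply (hM : IsShift J v M) (hv : ∀ p ∈ J, p + v ∈ J) (x : HJ J) (p : J) :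
    ContinuousLinearMap.adjoint M x p = x ⟨p + v, hv p p.2⟩ := by
  rw [← inner_e_left, ContinuousLinearMap.adjoint_inner_right, hM p p.2, inner_e_left]

open scoped Classical in
theorem adjoint_e (hM : IsShift J v M) (hv : ∀ p ∈ J, p + v ∈ J) (q : J) :
    ContinuousLinearMap.adjoint M (e J q) =
      if h : (q : ℤ × ℤ) - v ∈ J then e J ⟨_, h⟩ else 0 := by
  refine lp.ext (funext fun p => ?_)
  rw [hM.adjoint_apply hv]
  split_ifs with h
  · simp [e, Pi.single_apply, Subtype.ext_iff, eq_sub_iff_add_eq]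
  · have hpq : (⟨p + v, hv p p.2⟩ : J) ≠ q := by
      rintro rfl
      simp at h
    simp [e, hpq]

open scoped Classical in
theorem apply (hM : IsShift J v M) (hv : ∀ p ∈ J, p + v ∈ J) (x : HJ J) (q : J) :
    M x q = if h : (q : ℤ × ℤ) - v ∈ J then x ⟨_, h⟩ else 0 := by
  rw [← inner_e_left, ← ContinuousLinearMap.adjoint_inner_left, hM.adjoint_e hv]
  split_ifs
  · exact inner_e_left _ _
  · exact inner_zero_left _

theorem ker_adjoint (hM : IsShift J v M) (hv : ∀ p ∈ J, p + v ∈ J) :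
    LinearMap.ker (ContinuousLinearMap.adjoint M : HJ J →ₗ[ℂ] HJ J) =
      supportedIn ((↑) ⁻¹' {p | p - v ∉ J}) := by
  ext x
  rw [LinearMap.mem_ker, ContinuousLinearMap.coe_coe, mem_supportedIn]
  constructor
  · intro hx q hq
    have hq' : (q : ℤ × ℤ) - v ∈ J := not_not.mp hq
    simpa [hM.adjoint_apply hv] using congrArg (· ⟨_, hq'⟩) hx
  · intro hx
    refine lp.ext (funext fun p => ?_)
    rw [hM.adjoint_apply hv]
    exact hx _ (by simp)

theorem map_supportedIn (hM : IsShift J v M) (hv : ∀ p ∈ J, p + v ∈ J)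
    (S : Set (ℤ × ℤ)) :
    (supportedIn ((↑) ⁻¹' S)).map (M : HJ J →ₗ[ℂ] HJ J) =
      supportedIn ((↑) ⁻¹' {q | q - v ∈ J ∩ S}) := by
  apply le_antisymm
  · rintro _ ⟨x, hx, rfl⟩ q hq
    rw [ContinuousLinearMap.coe_coe, hM.apply hv]
    split_ifs with h
    · exact hx _ fun hS => hq ⟨h, hS⟩
    · rfl
  · intro y hy
    refine ⟨ContinuousLinearMap.adjoint M y, fun p hp => ?_, lp.ext (funext fun q => ?_)⟩
    · rw [hM.adjoint_apply hv]
      exact hy _ (by simpa using hp)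
    · rw [ContinuousLinearMap.coe_coe, hM.apply hv]
      split_ifs with h
      · rw [hM.adjoint_apply hv]
        exact congrArg y (Subtype.ext (sub_add_cancel _ _))
      · exact (hy q fun hq => h hq.1).symm

end IsShift

/-- Description of the kernels of `M_w*`, `M_z*`, their intersection,
`M_w(ker M_z*) ∩ M_z(ker M_w*)` and `ker M_w*M_z*` for the pair of isometries
defined by a diagram `J`, in terms of the borders of `J`. -/
theorem stmt3 (J : Set (ℤ × ℤ)) (hJ : IsDiagram J)
    (Mw Mz : HJ J →L[ℂ] HJ J) (hMw : IsShiftW J Mw) (hMz : IsShiftZ J Mz) :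
    LinearMap.ker (ContinuousLinearMap.adjoint Mw : HJ J →ₗ[ℂ] HJ J) =
      (Submodule.span ℂ (basisVecs J (JVB J))).topologicalClosure ∧
    LinearMap.ker (ContinuousLinearMap.adjoint Mz : HJ J →ₗ[ℂ] HJ J) =
      (Submodule.span ℂ (basisVecs J (JHB J))).topologicalClosure ∧
    LinearMap.ker (ContinuousLinearMap.adjoint Mw : HJ J →ₗ[ℂ] HJ J) ⊓
        LinearMap.ker (ContinuousLinearMap.adjoint Mz : HJ J →ₗ[ℂ] HJ J) =
      (Submodule.span ℂ (basisVecs J (Jouter J))).topologicalClosure ∧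
    Submodule.map (Mw : HJ J →ₗ[ℂ] HJ J) (LinearMap.ker (ContinuousLinearMap.adjoint Mz : HJ J →ₗ[ℂ] HJ J)) ⊓
        Submodule.map (Mz : HJ J →ₗ[ℂ] HJ J) (LinearMap.ker (ContinuousLinearMap.adjoint Mw : HJ J →ₗ[ℂ] HJ J)) =
      (Submodule.span ℂ (basisVecs J (Jinner J))).topologicalClosure ∧
    LinearMap.ker ((ContinuousLinearMap.adjoint Mw ∘L ContinuousLinearMap.adjoint Mz : HJ J →L[ℂ] HJ J) : HJ J →ₗ[ℂ] HJ J) =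
      (Submodule.span ℂ (basisVecs J (Jborder J))).topologicalClosure := by
  have hw : ∀ p ∈ J, p + (1, 0) ∈ J := hJ.add_mem zero_le_one le_rfl
  have hz : ∀ p ∈ J, p + (0, 1) ∈ J := hJ.add_mem le_rfl zero_le_one
  have hwz := hMw.isShift.comp hMz.isShift hw
  simp only [topologicalClosure_span_basisVecs, ← ContinuousLinearMap.adjoint_comp,
    hMw.isShift.ker_adjoint hw, hMz.isShift.ker_adjoint hz,
    hwz.ker_adjoint (hJ.add_mem zero_le_one zero_le_one),
    hMw.isShift.map_supportedIn hw, hMz.isShift.map_supportedIn hz, supportedIn_inf_supportedIn,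
    ← Set.preimage_inter]
  refine ⟨?_, ?_, ?_, ?_, ?_⟩ <;> refine supportedIn_preimage_congr fun ⟨a, b⟩ hp => ?_
  · simp [JVB, hp]
  · simp [JHB, hp]
  · simp [Jouter, JHB, JVB, hp, and_comm]
  · simp +contextual [Jinner, hp]
  · simpa using sub_one_one_notMem_iff_mem_Jborder hJ hp

end TaylorDiagram
end
end

section
/- Let J be a diagram with ℕ² ⊆ J and (M_w, M_z) the pair of isometries defined by J on H_J. For any μ, λ ∈ ℂ with |μ| < 1 and |λ| < 1, the vector h = √((1−|μ|²)(1−|λ|²)) · Σ_{(i,j)∈ℕ²} μ^i λ^j e_{(i,j)} is a unit vector in H_J satisfying ⟨M_w h, h⟩ = conj(μ) and ⟨M_z h, h⟩ = conj(λ) (inner product linear in the first variable). Consequently the closure of the joint numerical range W(M_w,M_z) = {(⟨M_w x, x⟩, ⟨M_z x, x⟩) : x ∈ H_J, ‖x‖ = 1} equals the closed bidisc {(μ,λ) : |μ| ≤ 1, |λ| ≤ 1}. -/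
/-!
The vector `h` is the normalized Szegő kernel of the bidisc at `(μ̄, ν̄)`, with coefficients
`c_q = √((1-|μ|²)(1-|ν|²)) μ^i ν^j` in an orthonormal family. Parseval and the geometric series
give `‖h‖² = Σ |c_q|² = 1`, and since `M_w` shifts the family while `c_{(i+1,j)} = μ c_{(i,j)}`,
`⟪M_w h, h⟫ = Σ c̄_q c_{(i+1,j)} = μ`; likewise for `M_z`. So the joint numerical range contains
the open bidisc. Conversely `M_w` and `M_z` send the standard Hilbert basis of `ℓ²(J)` injectively
into itself, hence are isometries, and Cauchy–Schwarz puts the numerical range in the closed bidisc.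
-/

open scoped ENNReal ComplexConjugate InnerProductSpace
open Filter

noncomputable section

namespace TaylorDiagram

section InnerProductSpace

variable {𝕜 E F ι κ : Type*} [RCLike 𝕜] [NormedAddCommGroup E] [InnerProductSpace 𝕜 E]
  [NormedAddCommGroup F] [InnerProductSpace 𝕜 F]

theorem _root_.HasSum.inner_left_of_smul {a : ι → 𝕜} {w : ι → E} {x : E}
    (hx : HasSum (fun i => a i • w i) x) (y : E) :
    HasSum (fun i => conj (a i) * ⟪w i, y⟫_𝕜) ⟪x, y⟫_𝕜 := by
  simpa only [innerSLFlip_apply_apply, inner_smul_left] using hx.mapL (innerSLFlip 𝕜 y)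

theorem _root_.Orthonormal.inner_eq_of_hasSum {v : ι → E} (hv : Orthonormal 𝕜 v) {a : ι → 𝕜}
    {x : E} (hx : HasSum (fun i => a i • v i) x) (i : ι) : ⟪v i, x⟫_𝕜 = a i := by
  have hsingle : HasSum (fun j => ⟪v i, a j • v j⟫_𝕜) (a i) := by
    convert hasSum_single (f := fun j => ⟪v i, a j • v j⟫_𝕜) i fun j hj => ?_ using 1
    · simp [inner_smul_right, hv.1 i]
    · rw [inner_smul_right, hv.2 hj.symm, mul_zero]
  exact (hx.mapL (innerSL 𝕜 (v i))).unique hsingle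

theorem _root_.Orthonormal.hasSum_inner_of_hasSum {v : ι → E} (hv : Orthonormal 𝕜 v) {a : ι → 𝕜}
    {b : κ → 𝕜} {σ : κ → ι} {x y : E} (hx : HasSum (fun i => a i • v i) x)
    (hy : HasSum (fun k => b k • v (σ k)) y) :
    HasSum (fun k => conj (b k) * a (σ k)) ⟪y, x⟫_𝕜 := by
  simpa only [hv.inner_eq_of_hasSum hx] using hy.inner_left_of_smul x

theorem _root_.Orthonormal.summable_smul [CompleteSpace E] {v : ι → E} (hv : Orthonormal 𝕜 v)
    {a : ι → 𝕜} (ha : Summable fun i => ‖a i‖ ^ 2) : Summable fun i => a i • v i :=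
  (hv.orthogonalFamily.summable_iff_norm_sq_summable a).mpr ha

theorem norm_eq_norm_of_inner_self_eq {x : E} {y : F} (h : ⟪x, x⟫_𝕜 = ⟪y, y⟫_𝕜) : ‖x‖ = ‖y‖ := by
  rw [norm_eq_sqrt_re_inner (𝕜 := 𝕜), norm_eq_sqrt_re_inner (𝕜 := 𝕜), h]

theorem _root_.HilbertBasis.norm_map_of_orthonormal (b : HilbertBasis ι 𝕜 E) (M : E →L[𝕜] F)
    {w : ι → F} (hw : Orthonormal 𝕜 w) (hM : ∀ i, M (b i) = w i) (x : E) : ‖M x‖ = ‖x‖ := by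
  have hx := b.hasSum_repr x
  have hMx : HasSum (fun i => b.repr x i • w i) (M x) := by
    simpa only [map_smul, hM] using hx.mapL M
  exact norm_eq_norm_of_inner_self_eq <|
    (hw.hasSum_inner_of_hasSum (σ := id) hMx hMx).unique
      (b.orthonormal.hasSum_inner_of_hasSum (σ := id) hx hx)

end InnerProductSpace

section Szego

/-- The coefficients of the normalized Szegő kernel of the bidisc at `(μ̄, ν̄)`. -/
def szegoCoeff (μ ν : ℂ) (q : ℕ × ℕ) : ℂ :=
  (√((1 - ‖μ‖ ^ 2) * (1 - ‖ν‖ ^ 2)) : ℂ) * (μ ^ q.1 * ν ^ q.2)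

variable {μ ν : ℂ}

theorem szegoCoeff_succ_fst (q : ℕ × ℕ) :
    szegoCoeff μ ν (q.1 + 1, q.2) = μ * szegoCoeff μ ν q := by
  simp only [szegoCoeff, pow_succ]
  ring

theorem szegoCoeff_succ_snd (q : ℕ × ℕ) :
    szegoCoeff μ ν (q.1, q.2 + 1) = ν * szegoCoeff μ ν q := by
  simp only [szegoCoeff, pow_succ]
  ring

theorem hasSum_norm_sq_szegoCoeff (hμ : ‖μ‖ < 1) (hν : ‖ν‖ < 1) :
    HasSum (fun q => ‖szegoCoeff μ ν q‖ ^ 2) 1 := by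
  have hμ2 : ‖μ‖ ^ 2 < 1 := pow_lt_one₀ (norm_nonneg μ) hμ two_ne_zero
  have hν2 : ‖ν‖ ^ 2 < 1 := pow_lt_one₀ (norm_nonneg ν) hν two_ne_zero
  have gμ := hasSum_geometric_of_lt_one (by positivity) hμ2
  have gν := hasSum_geometric_of_lt_one (by positivity) hν2
  have gprod := gμ.mul gν (gμ.summable.mul_of_nonneg gν.summable
    (fun _ => by positivity) (fun _ => by positivity))
  have hc : (1 - ‖μ‖ ^ 2) * (1 - ‖ν‖ ^ 2) * ((1 - ‖μ‖ ^ 2)⁻¹ * (1 - ‖ν‖ ^ 2)⁻¹) = 1 := by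
    field_simp [(sub_pos.mpr hμ2).ne', (sub_pos.mpr hν2).ne']
  have hsum := gprod.mul_left ((1 - ‖μ‖ ^ 2) * (1 - ‖ν‖ ^ 2))
  rw [hc] at hsum
  refine hsum.congr_fun fun q => ?_
  rw [szegoCoeff, norm_mul, Complex.norm_real, Real.norm_of_nonneg (Real.sqrt_nonneg _), mul_pow,
    Real.sq_sqrt (mul_nonneg (sub_pos.mpr hμ2).le (sub_pos.mpr hν2).le)]
  simp only [norm_mul, norm_pow]
  ring

theorem hasSum_conj_mul_szegoCoeff (hμ : ‖μ‖ < 1) (hν : ‖ν‖ < 1) :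
    HasSum (fun q => conj (szegoCoeff μ ν q) * szegoCoeff μ ν q) 1 :=
  (Complex.hasSum_ofReal.mpr (hasSum_norm_sq_szegoCoeff hμ hν)).congr_fun fun q => by
    rw [RCLike.conj_mul]
    norm_cast

variable {E : Type*} [NormedAddCommGroup E] [InnerProductSpace ℂ E] {v : ℕ × ℕ → E} {h : E}

theorem norm_eq_one_of_hasSum_szegoCoeff (hv : Orthonormal ℂ v) (hμ : ‖μ‖ < 1)
    (hν : ‖ν‖ < 1) (hh : HasSum (fun q => szegoCoeff μ ν q • v q) h) : ‖h‖ = 1 := by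
  have hinner : ⟪h, h⟫_ℂ = 1 :=
    (hv.hasSum_inner_of_hasSum (σ := id) hh hh).unique (hasSum_conj_mul_szegoCoeff hμ hν)
  rw [norm_eq_sqrt_re_inner (𝕜 := ℂ), hinner, RCLike.one_re, Real.sqrt_one]

theorem inner_map_eq_conj_of_hasSum_szegoCoeff (hv : Orthonormal ℂ v)
    (hμ : ‖μ‖ < 1) (hν : ‖ν‖ < 1) (hh : HasSum (fun q => szegoCoeff μ ν q • v q) h)
    {S : E →L[ℂ] E} {σ : ℕ × ℕ → ℕ × ℕ} {c : ℂ} (hS : ∀ q, S (v q) = v (σ q))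
    (hσ : ∀ q, szegoCoeff μ ν (σ q) = c * szegoCoeff μ ν q) :
    ⟪h, S h⟫_ℂ = conj c := by
  have hSh : HasSum (fun q => szegoCoeff μ ν q • v (σ q)) (S h) := by
    simpa only [map_smul, hS] using hh.mapL S
  have hsum : HasSum (fun q => conj (szegoCoeff μ ν q) * szegoCoeff μ ν (σ q)) (c * 1) := by
    simpa only [hσ, mul_left_comm _ c] using (hasSum_conj_mul_szegoCoeff hμ hν).mul_left c
  rw [← inner_conj_symm, (hv.hasSum_inner_of_hasSum hh hSh).unique hsum, mul_one]

end Szego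

section NumericalRange

open Metric

variable {E : Type*} [NormedAddCommGroup E] [InnerProductSpace ℂ E] {S T : E →L[ℂ] E}

def jointNumericalRange (S T : E →L[ℂ] E) : Set (ℂ × ℂ) :=
  {p | ∃ x : E, ‖x‖ = 1 ∧ p.1 = ⟪x, S x⟫_ℂ ∧ p.2 = ⟪x, T x⟫_ℂ}

theorem norm_inner_map_self_le_one {x : E} (hx : ‖x‖ = 1) (hS : ∀ y, ‖S y‖ ≤ ‖y‖) :
    ‖⟪x, S x⟫_ℂ‖ ≤ 1 :=
  calc ‖⟪x, S x⟫_ℂ‖ ≤ ‖x‖ * ‖S x‖ := norm_inner_le_norm _ _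
    _ ≤ ‖x‖ * ‖x‖ := by gcongr; exact hS x
    _ = 1 := by rw [hx, one_mul]

theorem jointNumericalRange_subset_closedBall_prod (hS : ∀ x, ‖S x‖ ≤ ‖x‖)
    (hT : ∀ x, ‖T x‖ ≤ ‖x‖) :
    jointNumericalRange S T ⊆ closedBall 0 1 ×ˢ closedBall 0 1 := by
  rintro p ⟨x, hx, h₁, h₂⟩
  simp only [Set.mem_prod, mem_closedBall_zero_iff, h₁, h₂]
  exact ⟨norm_inner_map_self_le_one hx hS, norm_inner_map_self_le_one hx hT⟩

variable [CompleteSpace E] {v : ℕ × ℕ → E}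

theorem ball_prod_ball_subset_jointNumericalRange (hv : Orthonormal ℂ v)
    (hS : ∀ q, S (v q) = v (q.1 + 1, q.2)) (hT : ∀ q, T (v q) = v (q.1, q.2 + 1)) :
    ball 0 1 ×ˢ ball 0 1 ⊆ jointNumericalRange S T := by
  rintro ⟨μ, ν⟩ ⟨hμ, hν⟩
  rw [mem_ball_zero_iff, ← RCLike.norm_conj] at hμ hν
  obtain ⟨h, hh⟩ := hv.summable_smul (hasSum_norm_sq_szegoCoeff hμ hν).summable
  refine ⟨h, norm_eq_one_of_hasSum_szegoCoeff hv hμ hν hh, ?_, ?_⟩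
  · rw [inner_map_eq_conj_of_hasSum_szegoCoeff hv hμ hν hh hS szegoCoeff_succ_fst,
      RCLike.conj_conj]
  · rw [inner_map_eq_conj_of_hasSum_szegoCoeff hv hμ hν hh hT szegoCoeff_succ_snd,
      RCLike.conj_conj]

theorem closure_jointNumericalRange_eq_closedBall_prod (hv : Orthonormal ℂ v)
    (hSv : ∀ q, S (v q) = v (q.1 + 1, q.2)) (hTv : ∀ q, T (v q) = v (q.1, q.2 + 1))
    (hS : ∀ x, ‖S x‖ ≤ ‖x‖) (hT : ∀ x, ‖T x‖ ≤ ‖x‖) :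
    closure (jointNumericalRange S T) = closedBall 0 1 ×ˢ closedBall 0 1 := by
  refine (closure_minimal (jointNumericalRange_subset_closedBall_prod hS hT)
    (isClosed_closedBall.prod isClosed_closedBall)).antisymm ?_
  rw [← closure_ball (0 : ℂ) one_ne_zero, ← closure_prod_eq]
  exact closure_mono (ball_prod_ball_subset_jointNumericalRange hv hSv hTv)

end NumericalRange

section Diagram

variable {J : Set (ℤ × ℤ)}

def quadrant (hN : ∀ p : ℤ × ℤ, 0 ≤ p.1 → 0 ≤ p.2 → p ∈ J) (q : ℕ × ℕ) : J :=
  ⟨((q.1 : ℤ), (q.2 : ℤ)), hN ((q.1 : ℤ), (q.2 : ℤ)) (Int.natCast_nonneg _) (Int.natCast_nonneg _)⟩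

theorem quadrant_injective (hN : ∀ p : ℤ × ℤ, 0 ≤ p.1 → 0 ≤ p.2 → p ∈ J) :
    Function.Injective (quadrant hN) := by
  intro q q' h
  simpa [quadrant, Prod.ext_iff] using h

variable (J) in
def stdBasis : HilbertBasis J ℂ (HJ J) :=
  HilbertBasis.ofRepr (LinearIsometryEquiv.refl ℂ _)

theorem coe_stdBasis : ⇑(stdBasis J) = e J := by
  classical
  ext1 p
  rw [← HilbertBasis.repr_symm_single]
  rfl

variable (J) in
theorem orthonormal_e : Orthonormal ℂ (e J) :=
  coe_stdBasis (J := J) ▸ (stdBasis J).orthonormal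

variable {Mw Mz : HJ J →L[ℂ] HJ J}

theorem IsShiftW.apply_quadrant (hMw : IsShiftW J Mw)
    (hN : ∀ p : ℤ × ℤ, 0 ≤ p.1 → 0 ≤ p.2 → p ∈ J) (q : ℕ × ℕ) :
    Mw (e J (quadrant hN q)) = e J (quadrant hN (q.1 + 1, q.2)) := by
  rw [hMw _ _ (by simpa [quadrant] using (quadrant hN (q.1 + 1, q.2)).2)]
  simp [quadrant]

theorem IsShiftZ.apply_quadrant (hMz : IsShiftZ J Mz)
    (hN : ∀ p : ℤ × ℤ, 0 ≤ p.1 → 0 ≤ p.2 → p ∈ J) (q : ℕ × ℕ) :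
    Mz (e J (quadrant hN q)) = e J (quadrant hN (q.1, q.2 + 1)) := by
  rw [hMz _ _ (by simpa [quadrant] using (quadrant hN (q.1, q.2 + 1)).2)]
  simp [quadrant]

theorem norm_map_of_apply_e_eq {M : HJ J →L[ℂ] HJ J} {σ : J → J} (hσ : Function.Injective σ)
    (hM : ∀ p, M (e J p) = e J (σ p)) (x : HJ J) : ‖M x‖ = ‖x‖ :=
  (stdBasis J).norm_map_of_orthonormal M ((orthonormal_e J).comp σ hσ)
    (fun p => by rw [coe_stdBasis]; exact hM p) x

theorem IsShiftW.norm_map (hMw : IsShiftW J Mw) (hJ : IsDiagram J) (x : HJ J) :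
    ‖Mw x‖ = ‖x‖ :=
  norm_map_of_apply_e_eq (σ := fun p => ⟨(p.1.1 + 1, p.1.2), by simpa using hJ p.1 p.2 1 0⟩)
    (fun p p' h => by simpa [Subtype.ext_iff, Prod.ext_iff] using h) (fun p => hMw _ p.2 _) x

theorem IsShiftZ.norm_map (hMz : IsShiftZ J Mz) (hJ : IsDiagram J) (x : HJ J) :
    ‖Mz x‖ = ‖x‖ :=
  norm_map_of_apply_e_eq (σ := fun p => ⟨(p.1.1, p.1.2 + 1), by simpa using hJ p.1 p.2 0 1⟩)
    (fun p p' h => by simpa [Subtype.ext_iff, Prod.ext_iff] using h) (fun p => hMz _ p.2 _) x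

end Diagram

/-- For a diagram containing `ℕ²` and `|μ|,|ν| < 1`, the normalized vector
`h = √((1−|μ|²)(1−|ν|²)) Σ μ^i ν^j e_{(i,j)}` is a unit vector with
`⟨M_w h, h⟩ = μ̄` and `⟨M_z h, h⟩ = ν̄` (paper's inner product, linear in the first
variable, is `⟪h, ·⟫` in Mathlib's convention); consequently the closure of the joint
numerical range of `(M_w, M_z)` is the closed bidisc. -/
theorem stmt9 (J : Set (ℤ × ℤ)) (hJ : IsDiagram J)
    (hN : ∀ p : ℤ × ℤ, 0 ≤ p.1 → 0 ≤ p.2 → p ∈ J)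
    (Mw Mz : HJ J →L[ℂ] HJ J) (hMw : IsShiftW J Mw) (hMz : IsShiftZ J Mz)
    (μ ν : ℂ) (hμ : ‖μ‖ < 1) (hν : ‖ν‖ < 1) (h : HJ J)
    (hh : HasSum (fun q : ℕ × ℕ =>
      ((Real.sqrt ((1 - ‖μ‖ ^ 2) * (1 - ‖ν‖ ^ 2)) : ℂ) * (μ ^ q.1 * ν ^ q.2)) •
        e J ⟨((q.1 : ℤ), (q.2 : ℤ)),
          hN ((q.1 : ℤ), (q.2 : ℤ)) (Int.natCast_nonneg _) (Int.natCast_nonneg _)⟩) h) :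
    ‖h‖ = 1 ∧
    ⟪h, Mw h⟫_ℂ = starRingEnd ℂ μ ∧
    ⟪h, Mz h⟫_ℂ = starRingEnd ℂ ν ∧
    closure {p : ℂ × ℂ | ∃ x : HJ J, ‖x‖ = 1 ∧ p.1 = ⟪x, Mw x⟫_ℂ ∧ p.2 = ⟪x, Mz x⟫_ℂ} =
      {p : ℂ × ℂ | ‖p.1‖ ≤ 1 ∧ ‖p.2‖ ≤ 1} := by
  have hv : Orthonormal ℂ (e J ∘ quadrant hN) := (orthonormal_e J).comp _ (quadrant_injective hN)
  have hw : ∀ q, Mw ((e J ∘ quadrant hN) q) = (e J ∘ quadrant hN) (q.1 + 1, q.2) :=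
    hMw.apply_quadrant hN
  have hz : ∀ q, Mz ((e J ∘ quadrant hN) q) = (e J ∘ quadrant hN) (q.1, q.2 + 1) :=
    hMz.apply_quadrant hN
  have hbidisc : Metric.closedBall (0 : ℂ) 1 ×ˢ Metric.closedBall (0 : ℂ) 1 =
      {p : ℂ × ℂ | ‖p.1‖ ≤ 1 ∧ ‖p.2‖ ≤ 1} := by
    ext
    simp
  refine ⟨norm_eq_one_of_hasSum_szegoCoeff hv hμ hν hh,
    inner_map_eq_conj_of_hasSum_szegoCoeff hv hμ hν hh hw szegoCoeff_succ_fst,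
    inner_map_eq_conj_of_hasSum_szegoCoeff hv hμ hν hh hz szegoCoeff_succ_snd, ?_⟩
  rw [← hbidisc]
  exact closure_jointNumericalRange_eq_closedBall_prod hv hw hz
    (fun x => (hMw.norm_map hJ x).le) (fun x => (hMz.norm_map hJ x).le)

end TaylorDiagram
end
end

section
/- For k ≥ 1 let T_k ∈ B(ℂ^k) be the truncated shift of index k (T_k maps the j-th standard basis vector to the (j+1)-st for j < k and the k-th to 0), so σ(T_k) = {0}. Let (k_i)_{i≥0} be a strictly increasing sequence of positive integers and let T = ⊕_{i≥0} T_{k_i} be the orthogonal direct sum acting on the Hilbert space ⊕_{i≥0} ℂ^{k_i} (the ℓ²-direct sum). Then for every λ ∈ ℂ with 0 < |λ| ≤ 1 the range of λ − T is not closed; consequently σ(T) equals the closed unit disc. -/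
open scoped ENNReal NNReal

/-! Since `Sⁿ = 0` for the truncated shift `S` of index `n`, `σ(S) = {0}`; in particular, for
`λ ≠ 0` every block `λ − T_{k_i}` is invertible, so `λ − T` is injective. The geometric vector
`v = (λ⁻ʲ)_{j<n}` satisfies `(λ − S) v = λ e₀`, while `‖v‖ ≥ √n` once `|λ| ≤ 1`. Since `k_i → ∞`,
`λ − T` is not bounded below, and an injective operator with closed range would be (open
mapping theorem); so `λ ∈ σ(T)` for `0 < |λ| ≤ 1`. Closedness of the spectrum adds `0`, and
`‖T‖ ≤ 1` bounds `σ(T)` by the unit disc. -/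

noncomputable section

namespace TruncShift

/-- `S` is the truncated shift of index `n` on `ℂⁿ`: it maps the `j`-th standard basis
vector to the `(j+1)`-st for `j < n − 1` and the last one to `0`; in coordinates,
`(S v)_0 = 0` and `(S v)_j = v_{j−1}` for `j ≥ 1`. -/
def IsTruncShift {n : ℕ} (S : EuclideanSpace ℂ (Fin n) →L[ℂ] EuclideanSpace ℂ (Fin n)) :
    Prop :=
  ∀ (v : EuclideanSpace ℂ (Fin n)) (j : Fin n),
    S v j = if hj : (j : ℕ) = 0 then 0 else v ⟨(j : ℕ) - 1, by have := j.isLt; omega⟩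

theorem spectrum_subset_singleton_zero_of_isNilpotent {𝕜 A : Type*} [Field 𝕜] [Ring A]
    [Algebra 𝕜 A] {a : A} (ha : IsNilpotent a) : spectrum 𝕜 a ⊆ {0} := by
  intro μ hμ
  by_contra hμ0
  apply hμ
  rw [spectrum.mem_resolventSet_iff, sub_eq_add_neg]
  exact ha.neg.isUnit_add_left_of_commute ((Ne.isUnit hμ0).map _) (Algebra.commutes μ (-a)).symm

theorem not_isClosed_range_of_not_boundedBelow {𝕜 E F : Type*} [NontriviallyNormedField 𝕜]
    [NormedAddCommGroup E] [NormedSpace 𝕜 E] [CompleteSpace E]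
    [NormedAddCommGroup F] [NormedSpace 𝕜 F] [CompleteSpace F] {f : E →L[𝕜] F}
    (hf : Function.Injective f) (hunb : ∀ K : ℝ≥0, ∃ x, K * ‖f x‖ < ‖x‖) :
    ¬ IsClosed (Set.range f) := by
  intro hcl
  obtain ⟨K, hK⟩ := f.antilipschitz_of_injective_of_isClosed_range hf hcl
  obtain ⟨x, hx⟩ := hunb K
  exact hx.not_ge (f.bound_of_antilipschitz hK x)

theorem mem_spectrum_of_not_isClosed_range {𝕜 E : Type*} [NontriviallyNormedField 𝕜]
    [NormedAddCommGroup E] [NormedSpace 𝕜 E] [CompleteSpace E] {T : E →L[𝕜] E} {μ : 𝕜}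
    (h : ¬ IsClosed (Set.range (μ • (1 : E →L[𝕜] E) - T))) : μ ∈ spectrum 𝕜 T := by
  rw [spectrum.mem_iff, Algebra.algebraMap_eq_smul_one, ContinuousLinearMap.isUnit_iff_bijective]
  exact fun hbij => h (by rw [hbij.surjective.range_eq]; exact isClosed_univ)

theorem closedBall_subset_of_diff_singleton_subset {E : Type*} [NormedAddCommGroup E]
    [NormedSpace ℝ E] [Nontrivial E] {s : Set E} (hs : IsClosed s) (x : E) {r : ℝ} (hr : r ≠ 0)
    (h : Metric.closedBall x r \ {x} ⊆ s) : Metric.closedBall x r ⊆ s := by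
  have hball : Metric.ball x r ⊆ closure (Metric.ball x r \ {x}) := fun y hy =>
    Metric.isOpen_ball.inter_closure (t := {x}ᶜ) ⟨hy, by rw [closure_compl_singleton]; trivial⟩
  calc Metric.closedBall x r = closure (Metric.ball x r) := (closure_ball x hr).symm
    _ ⊆ closure (Metric.ball x r \ {x}) := closure_minimal hball isClosed_closure
    _ ⊆ s := closure_minimal
      ((Set.sdiff_subset_sdiff_left Metric.ball_subset_closedBall).trans h) hs

section BlockDiagonal

variable {𝕜 ι : Type*} [NontriviallyNormedField 𝕜] {E : ι → Type*}
  [∀ i, NormedAddCommGroup (E i)] [∀ i, NormedSpace 𝕜 (E i)] {p : ℝ≥0∞} [Fact (1 ≤ p)]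
  {T : lp E p →L[𝕜] lp E p} {S : ∀ i, E i →L[𝕜] E i}

def IsBlockDiagonal (T : lp E p →L[𝕜] lp E p) (S : ∀ i, E i →L[𝕜] E i) : Prop :=
  ∀ x i, T x i = S i (x i)

namespace IsBlockDiagonal

theorem smul_one_sub (hT : IsBlockDiagonal T S) (c : 𝕜) :
    IsBlockDiagonal (c • 1 - T) fun i => c • 1 - S i := by
  intro x i
  simp only [sub_apply, smul_apply, one_apply_eq_self, lp.coeFn_sub, lp.coeFn_smul, Pi.sub_apply,
    Pi.smul_apply, hT x i]

theorem injective (hT : IsBlockDiagonal T S) (hS : ∀ i, Function.Injective (S i)) :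
    Function.Injective T := fun x y hxy =>
  lp.ext <| funext fun i => hS i <| by rw [← hT, ← hT, hxy]

theorem apply_single [DecidableEq ι] (hT : IsBlockDiagonal T S) (i : ι) (v : E i) :
    T (lp.single p i v) = lp.single p i (S i v) := by
  ext j
  rw [hT]
  rcases eq_or_ne j i with rfl | hji
  · simp only [lp.single_apply_self]
  · simp only [lp.single_apply_ne p i _ hji, map_zero]

theorem norm_apply_le (hT : IsBlockDiagonal T S) (hS : ∀ i v, ‖S i v‖ ≤ ‖v‖) (x : lp E p) :
    ‖T x‖ ≤ ‖x‖ :=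
  lp.norm_mono (zero_lt_one.trans_le Fact.out).ne' fun i => hT x i ▸ hS i (x i)

end IsBlockDiagonal

end BlockDiagonal

local notation "ℂ^" n:max => EuclideanSpace ℂ (Fin n)

def truncShift (n : ℕ) : ℂ^n →L[ℂ] ℂ^n :=
  LinearMap.toContinuousLinearMap
    { toFun := fun v => WithLp.toLp 2 fun j =>
        if _ : (j : ℕ) = 0 then 0 else v ⟨(j : ℕ) - 1, by omega⟩
      map_add' := fun v w => by ext j; by_cases hj : (j : ℕ) = 0 <;> simp [hj]
      map_smul' := fun c v => by ext j; by_cases hj : (j : ℕ) = 0 <;> simp [hj] }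

theorem isTruncShift_truncShift (n : ℕ) : IsTruncShift (truncShift n) := fun _ _ => rfl

def geomVec (n : ℕ) (z : ℂ) : ℂ^n :=
  WithLp.toLp 2 fun j => z ^ (j : ℕ)

theorem sqrt_le_norm_geomVec {n : ℕ} {z : ℂ} (hz : 1 ≤ ‖z‖) : √n ≤ ‖geomVec n z‖ := by
  rw [EuclideanSpace.norm_eq]
  refine Real.sqrt_le_sqrt ?_
  calc (n : ℝ) = ∑ _j : Fin n, 1 := by simp
    _ ≤ ∑ j : Fin n, ‖geomVec n z j‖ ^ 2 := Finset.sum_le_sum fun j _ => by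
      simp only [geomVec, norm_pow]
      exact one_le_pow₀ (one_le_pow₀ hz)

namespace IsTruncShift

variable {n : ℕ} {S : ℂ^n →L[ℂ] ℂ^n}

theorem pow_apply (hS : IsTruncShift S) (m : ℕ) (v : ℂ^n) (j : Fin n) :
    (S ^ m) v j = if _ : (j : ℕ) < m then 0 else v ⟨(j : ℕ) - m, by omega⟩ := by
  induction m generalizing v with
  | zero => simp
  | succ m ih =>
    rw [pow_succ]
    change (S ^ m) (S v) j = _
    rw [ih]
    by_cases hjm : (j : ℕ) < m
    · simp [hjm, Nat.lt_succ_of_lt hjm]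
    · rw [dif_neg hjm, hS v]
      by_cases hj : (j : ℕ) = m
      · rw [dif_pos (by simp [hj]), dif_pos (by omega)]
      · rw [dif_neg (by simp; omega), dif_neg (by omega)]
        exact congrArg v.ofLp (Fin.ext (by simp; omega))

theorem pow_eq_zero (hS : IsTruncShift S) : S ^ n = 0 := by
  ext v j
  rw [hS.pow_apply, dif_pos j.isLt]
  rfl

theorem spectrum_subset (hS : IsTruncShift S) : spectrum ℂ S ⊆ {0} :=
  spectrum_subset_singleton_zero_of_isNilpotent ⟨n, hS.pow_eq_zero⟩

theorem spectrum_eq (hS : IsTruncShift S) (hn : 1 ≤ n) : spectrum ℂ S = {0} := by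
  have : NeZero n := ⟨by omega⟩
  obtain ⟨μ, hμ⟩ := spectrum.nonempty S
  exact hS.spectrum_subset.antisymm (Set.singleton_subset_iff.mpr (hS.spectrum_subset hμ ▸ hμ))

theorem injective_smul_one_sub (hS : IsTruncShift S) {μ : ℂ} (hμ : μ ≠ 0) :
    Function.Injective (μ • (1 : ℂ^n →L[ℂ] ℂ^n) - S) := by
  have hunit := spectrum.notMem_iff.mp fun h => hμ (hS.spectrum_subset h)
  rw [Algebra.algebraMap_eq_smul_one, ContinuousLinearMap.isUnit_iff_bijective] at hunit
  exact hunit.injective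

theorem norm_apply_le (hS : IsTruncShift S) (v : ℂ^n) : ‖S v‖ ≤ ‖v‖ := by
  rw [EuclideanSpace.norm_eq, EuclideanSpace.norm_eq]
  refine Real.sqrt_le_sqrt ?_
  rcases n with _ | m
  · simp
  rw [Fin.sum_univ_succ, Fin.sum_univ_castSucc]
  have h0 : S v 0 = 0 := by rw [hS]; rfl
  have hsucc : ∀ i : Fin m, S v i.succ = v i.castSucc := fun i => by rw [hS]; rfl
  rw [h0, norm_zero, zero_pow two_ne_zero, zero_add]
  simp only [hsucc]
  exact le_add_of_nonneg_right (sq_nonneg _)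

theorem smul_one_sub_apply_geomVec (hS : IsTruncShift S) {μ : ℂ} (hμ : μ ≠ 0) (j : Fin n) :
    (μ • (1 : ℂ^n →L[ℂ] ℂ^n) - S) (geomVec n μ⁻¹) j = if (j : ℕ) = 0 then μ else 0 := by
  rw [sub_apply, smul_apply, one_apply_eq_self, PiLp.sub_apply, PiLp.smul_apply, hS]
  by_cases hj : (j : ℕ) = 0
  · simp [hj, geomVec]
  · obtain ⟨i, hi⟩ : ∃ i, (j : ℕ) = i + 1 := ⟨j - 1, by omega⟩
    rw [dif_neg hj, if_neg hj]
    simp only [geomVec, smul_eq_mul, hi, Nat.add_sub_cancel, pow_succ', ← mul_assoc,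
      mul_inv_cancel₀ hμ, one_mul, sub_self]

theorem norm_smul_one_sub_apply_geomVec_le (hS : IsTruncShift S) {μ : ℂ} (hμ : μ ≠ 0) :
    ‖(μ • (1 : ℂ^n →L[ℂ] ℂ^n) - S) (geomVec n μ⁻¹)‖ ≤ ‖μ‖ := by
  rcases n with _ | m
  · simp [EuclideanSpace.norm_eq]
  have : (μ • (1 : ℂ^(m + 1) →L[ℂ] ℂ^(m + 1)) - S) (geomVec (m + 1) μ⁻¹) =
      PiLp.single 2 (0 : Fin (m + 1)) μ := by
    ext j
    rw [hS.smul_one_sub_apply_geomVec hμ, PiLp.single_apply]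
    by_cases hj : j = 0 <;> simp [hj, Fin.val_eq_zero_iff]
  rw [this, PiLp.norm_single]

end IsTruncShift

section DirectSum

variable {ι : Type*} {k : ι → ℕ} {S : ∀ i, ℂ^(k i) →L[ℂ] ℂ^(k i)}
  {T : lp (fun i => ℂ^(k i)) 2 →L[ℂ] lp (fun i => ℂ^(k i)) 2}

theorem not_isClosed_range_smul_one_sub (hk : ¬ BddAbove (Set.range k))
    (hS : ∀ i, IsTruncShift (S i)) (hT : IsBlockDiagonal T S) {μ : ℂ} (hμ0 : μ ≠ 0)
    (hμ1 : ‖μ‖ ≤ 1) :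
    ¬ IsClosed
      (Set.range (μ • (1 : lp (fun i => ℂ^(k i)) 2 →L[ℂ] lp (fun i => ℂ^(k i)) 2) - T)) := by
  classical
  have hA := hT.smul_one_sub μ
  refine not_isClosed_range_of_not_boundedBelow
    (hA.injective fun i => (hS i).injective_smul_one_sub hμ0) fun K => ?_
  obtain ⟨_, ⟨i, rfl⟩, hi⟩ := not_bddAbove_iff.mp hk ⌈(K : ℝ) ^ 2⌉₊
  have hμinv : 1 ≤ ‖μ⁻¹‖ := by
    rw [norm_inv]
    exact one_le_inv₀ (norm_pos_iff.mpr hμ0) |>.mpr hμ1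
  refine ⟨lp.single 2 i (geomVec (k i) μ⁻¹), ?_⟩
  rw [hA.apply_single, lp.norm_single two_pos, lp.norm_single two_pos]
  calc K * ‖(μ • (1 : ℂ^(k i) →L[ℂ] ℂ^(k i)) - S i) (geomVec (k i) μ⁻¹)‖ ≤ K * 1 :=
        mul_le_mul_of_nonneg_left
          ((hS i).norm_smul_one_sub_apply_geomVec_le hμ0 |>.trans hμ1) K.2
    _ < √(k i) := by rw [mul_one]; exact Real.lt_sqrt K.2 |>.mpr (Nat.lt_of_ceil_lt hi)
    _ ≤ ‖geomVec (k i) μ⁻¹‖ := sqrt_le_norm_geomVec hμinv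

theorem spectrum_eq_closedBall (hk : ¬ BddAbove (Set.range k))
    (hS : ∀ i, IsTruncShift (S i)) (hT : IsBlockDiagonal T S) :
    spectrum ℂ T = Metric.closedBall 0 1 := by
  have hT1 : ‖T‖ ≤ 1 := T.opNorm_le_bound zero_le_one fun x => by
    rw [one_mul]
    exact hT.norm_apply_le (fun i => (hS i).norm_apply_le) x
  have hnorm : ‖T‖ * ‖(1 : lp (fun i => ℂ^(k i)) 2 →L[ℂ] lp (fun i => ℂ^(k i)) 2)‖ ≤ 1 :=
    mul_le_one₀ hT1 (norm_nonneg _) ContinuousLinearMap.norm_id_le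
  refine ((spectrum.subset_closedBall_norm_mul T).trans
    (Metric.closedBall_subset_closedBall hnorm)).antisymm ?_
  refine closedBall_subset_of_diff_singleton_subset (spectrum.isClosed T) 0 one_ne_zero
    fun μ hμ => mem_spectrum_of_not_isClosed_range ?_
  exact not_isClosed_range_smul_one_sub hk hS hT hμ.2 (mem_closedBall_zero_iff.mp hμ.1)

end DirectSum

/-- The spectrum of a truncated shift is `{0}`; and if `(k_i)` is a strictly increasing
sequence of positive integers and `T = ⊕ T_{k_i}` is the ℓ²-direct sum of the truncated
shifts of indices `k_i`, then for every `λ` with `0 < |λ| ≤ 1` the range of `λ − T` is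
not closed; consequently `σ(T)` is the closed unit disc. -/
theorem stmt14 (k : ℕ → ℕ) (hmono : StrictMono k)
    (T : lp (fun i : ℕ => EuclideanSpace ℂ (Fin (k i))) 2 →L[ℂ]
          lp (fun i : ℕ => EuclideanSpace ℂ (Fin (k i))) 2)
    (hT : ∀ (x : lp (fun i : ℕ => EuclideanSpace ℂ (Fin (k i))) 2) (i : ℕ)
        (j : Fin (k i)),
      T x i j = if hj : (j : ℕ) = 0 then 0 else x i ⟨(j : ℕ) - 1, by have := j.isLt; omega⟩) :
    (∀ (n : ℕ) (S : EuclideanSpace ℂ (Fin n) →L[ℂ] EuclideanSpace ℂ (Fin n)),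
      1 ≤ n → IsTruncShift S → spectrum ℂ S = {0}) ∧
    (∀ lam : ℂ, 0 < ‖lam‖ → ‖lam‖ ≤ 1 →
      ¬ IsClosed ((LinearMap.range ((lam • (1 : lp (fun i : ℕ =>
            EuclideanSpace ℂ (Fin (k i))) 2 →L[ℂ] lp (fun i : ℕ => EuclideanSpace ℂ (Fin (k i))) 2) - T).toLinearMap) :
          Submodule ℂ (lp (fun i : ℕ => EuclideanSpace ℂ (Fin (k i))) 2)) :
            Set (lp (fun i : ℕ => EuclideanSpace ℂ (Fin (k i))) 2))) ∧
    spectrum ℂ T = Metric.closedBall (0 : ℂ) 1 := by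
  have hk : ¬ BddAbove (Set.range k) := not_bddAbove_iff.mpr fun b =>
    ⟨k (b + 1), ⟨b + 1, rfl⟩, (Nat.lt_succ_self b).trans_le hmono.le_apply⟩
  have hS : ∀ i, IsTruncShift (truncShift (k i)) := fun i => isTruncShift_truncShift (k i)
  have hblock : IsBlockDiagonal T fun i => truncShift (k i) := fun x i => by
    ext j
    exact hT x i j
  refine ⟨fun n S hn hS => hS.spectrum_eq hn, fun μ hμ0 hμ1 => ?_,
    spectrum_eq_closedBall hk hS hblock⟩
  rw [LinearMap.coe_range]
  exact not_isClosed_range_smul_one_sub hk hS hblock (norm_pos_iff.mp hμ0) hμ1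

end TruncShift
end
end
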